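/- arXiv:1105.0178 — 2 statements merged into one kernel-verified Lean document; each statement's English description precedes it below -/
import Mathlib

section
/- For every nonnegative integer n, ∑_{k=0}^{n} (2k+1)·H_k³ = (n+1)²·H_n³ − (3/2)·n(n+1)·H_n² + ((3n²+3n+1)/2)·H_n − (3/4)·n(n+1). -/
/-
Regard the right-hand side as a cubic `cubeHarmonicSum n h` in `h = H_n`. Replacing `n` by `n + 1`
and `h` by `h + 1/(n+1)` raises it by exactly `(2n+3) (h + 1/(n+1))^3`, identically in `h`, so the
sum telescopes.
-/

def harmonic' (n : ℕ) : ℚ := ∑ j ∈ Finset.Icc 1 n, (1 / j : ℚ)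

lemma harmonic'_succ (n : ℕ) : harmonic' (n + 1) = harmonic' n + 1 / (n + 1 : ℚ) := by
  unfold harmonic'
  rw [Finset.sum_Icc_succ_top (by omega)]
  push_cast
  ring

def cubeHarmonicSum (n : ℕ) (h : ℚ) : ℚ :=
  ((n : ℚ) + 1) ^ 2 * h ^ 3 - (3 / 2) * n * (n + 1) * h ^ 2
    + ((3 * (n : ℚ) ^ 2 + 3 * n + 1) / 2) * h - (3 / 4) * n * (n + 1)

lemma cubeHarmonicSum_succ (n : ℕ) (h : ℚ) :
    cubeHarmonicSum (n + 1) (h + 1 / (n + 1)) =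
      cubeHarmonicSum n h + (2 * ((n : ℚ) + 1) + 1) * (h + 1 / (n + 1)) ^ 3 := by
  have hn : (n : ℚ) + 1 ≠ 0 := by positivity
  unfold cubeHarmonicSum
  push_cast
  field_simp
  ring

theorem stmt_9 (n : ℕ) :
    ∑ k ∈ Finset.range (n + 1), (2 * (k : ℚ) + 1) * harmonic' k ^ 3
      = ((n : ℚ) + 1) ^ 2 * harmonic' n ^ 3 - (3 / 2) * n * (n + 1) * harmonic' n ^ 2
        + ((3 * (n : ℚ) ^ 2 + 3 * n + 1) / 2) * harmonic' n - (3 / 4) * n * (n + 1) := by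
  change _ = cubeHarmonicSum n (harmonic' n)
  induction n with
  | zero => simp [harmonic', cubeHarmonicSum]
  | succ n ih =>
    rw [Finset.sum_range_succ, ih, harmonic'_succ, cubeHarmonicSum_succ]
    push_cast
    ring
end

section
/- For every nonnegative integer n, ∑_{k=0}^{n} (1 + 3(n − 2k)·H_k)·C(n,k)³ = (−1)^n. -/
open Finset

theorem harmonic'_eq_harmonic : harmonic' = harmonic := by
  funext n
  rw [harmonic_eq_sum_Icc]
  simp only [harmonic', one_div]

section Choose

variable {R : Type*} [CommRing R]

theorem Nat.cast_sub_mul_choose_succ (n k : ℕ) :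
    (n + 1 - k : R) * ((n + 1).choose k : R) = (n + 1) * (n.choose k : R) := by
  rcases le_or_gt k (n + 1) with h | h
  · have := congrArg (Nat.cast : ℕ → R) (Nat.choose_mul_succ_eq n k)
    push_cast [h] at this
    linear_combination -this
  · simp [Nat.choose_eq_zero_of_lt h, Nat.choose_eq_zero_of_lt (Nat.lt_of_succ_lt h)]

theorem Nat.cast_succ_mul_choose_succ (n k : ℕ) :
    (k + 1 : R) * (n.choose (k + 1) : R) = (n - k) * (n.choose k : R) := by
  rcases le_or_gt k n with h | h
  · have := congrArg (Nat.cast : ℕ → R) (Nat.choose_succ_right_eq n k)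
    push_cast [h] at this
    linear_combination this
  · simp [Nat.choose_eq_zero_of_lt h, Nat.choose_eq_zero_of_lt (Nat.lt_succ_of_lt h)]

end Choose

namespace HarmonicCubeSum

def term (n k : ℕ) : ℚ :=
  (1 + 3 * ((n : ℚ) - 2 * k) * harmonic k) * (n.choose k : ℚ) ^ 3

def cubeSum (n : ℕ) : ℚ :=
  ∑ k ∈ range (n + 1), term n k

-- The Zeilberger certificate of `term`, found by creative telescoping.
def certificate (n k : ℕ) : ℚ :=
  let N : ℚ := n
  let K : ℚ := k
  ((-2 * K ^ 6 + 6 * (2 * N + 3) * K ^ 5 - 3 * (9 * N ^ 2 + 28 * N + 21) * K ^ 4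
      + 2 * (N + 2) * (14 * N ^ 2 + 39 * N + 26) * K ^ 3
      - 6 * (N + 1) * (2 * N + 3) * (N + 2) ^ 2 * K ^ 2)
    + 3 * K ^ 3 * (K ^ 4 - (5 * N + 8) * K ^ 3 + 3 * (3 * N + 4) * (N + 2) * K ^ 2
      - (N + 2) * (8 * N ^ 2 + 24 * N + 17) * K + 2 * (N + 1) * (2 * N + 3) * (N + 2) ^ 2)
      * harmonic k)
    * ((n + 2).choose k : ℚ) ^ 3

theorem certificate_zero (n : ℕ) : certificate n 0 = 0 := by
  simp [certificate]

theorem certificate_of_lt {n k : ℕ} (h : n + 2 < k) : certificate n k = 0 := by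
  simp [certificate, Nat.choose_eq_zero_of_lt h]

theorem term_of_lt {n k : ℕ} (h : n < k) : term n k = 0 := by
  simp [term, Nat.choose_eq_zero_of_lt h]

theorem sum_range_term {n j : ℕ} (h : n + 1 ≤ j) :
    ∑ k ∈ range j, term n k = cubeSum n :=
  (sum_subset (range_subset_range.2 h) fun _ _ hk =>
    term_of_lt (by simpa using hk)).symm

theorem term_combination_eq_sub (n k : ℕ) :
    ((n : ℚ) + 1) ^ 3 * ((n : ℚ) + 2) ^ 3 * term n k
      + (2 * (n : ℚ) + 3) * ((n : ℚ) + 1) ^ 2 * ((n : ℚ) + 2) ^ 3 * term (n + 1) k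
      + ((n : ℚ) + 1) ^ 2 * ((n : ℚ) + 2) ^ 4 * term (n + 2) k
    = certificate n (k + 1) - certificate n k := by
  have hn1 : (n : ℚ) + 1 ≠ 0 := by positivity
  have hn2 : (n : ℚ) + 2 ≠ 0 := by positivity
  have hk1 : (k : ℚ) + 1 ≠ 0 := by positivity
  set c : ℚ := ((n + 2).choose k : ℚ)
  have hc₁ : ((n + 2).choose (k + 1) : ℚ) = ((n : ℚ) + 2 - k) * c / ((k : ℚ) + 1) := by
    rw [eq_div_iff hk1, mul_comm]
    have := Nat.cast_succ_mul_choose_succ (R := ℚ) (n + 2) k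
    push_cast at this
    linear_combination this
  have hc₂ : ((n + 1).choose k : ℚ) = ((n : ℚ) + 2 - k) * c / ((n : ℚ) + 2) := by
    rw [eq_div_iff hn2, mul_comm]
    have := Nat.cast_sub_mul_choose_succ (R := ℚ) (n + 1) k
    push_cast at this
    linear_combination -this
  have hc₃ : (n.choose k : ℚ) = ((n : ℚ) + 1 - k) * ((n + 1).choose k : ℚ) / ((n : ℚ) + 1) := by
    rw [eq_div_iff hn1, mul_comm]
    exact (Nat.cast_sub_mul_choose_succ n k).symm
  rw [hc₂] at hc₃
  simp only [term, certificate, harmonic_succ, hc₁, hc₂, hc₃]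
  push_cast
  field_simp
  ring

theorem cubeSum_recurrence (n : ℕ) :
    ((n : ℚ) + 1) * cubeSum n + (2 * (n : ℚ) + 3) * cubeSum (n + 1)
      + ((n : ℚ) + 2) * cubeSum (n + 2) = 0 := by
  have htel := sum_range_sub (certificate n) (n + 3)
  simp only [← term_combination_eq_sub, sum_add_distrib, ← mul_sum,
    sum_range_term (by omega : n + 1 ≤ n + 3), sum_range_term (by omega : n + 2 ≤ n + 3),
    sum_range_term (le_refl (n + 3)), certificate_zero, certificate_of_lt (by omega : n + 2 < n + 3),
    sub_zero] at htel
  have hfactor : ((n : ℚ) + 1) ^ 2 * ((n : ℚ) + 2) ^ 3 ≠ 0 := by positivity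
  refine (mul_eq_zero.mp ?_).resolve_left hfactor
  linear_combination htel

theorem cubeSum_eq_neg_one_pow (n : ℕ) : cubeSum n = (-1) ^ n := by
  induction n using Nat.twoStepInduction with
  | zero => simp [cubeSum, term]
  | one => norm_num [cubeSum, term, sum_range_succ]
  | more n ih₀ ih₁ =>
    have hrec := cubeSum_recurrence n
    rw [ih₀, ih₁] at hrec
    have hn2 : (n : ℚ) + 2 ≠ 0 := by positivity
    refine mul_left_cancel₀ hn2 ?_
    linear_combination hrec

end HarmonicCubeSum

theorem stmt_12 (n : ℕ) :
    ∑ k ∈ Finset.range (n + 1),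
        (1 + 3 * ((n : ℚ) - 2 * k) * harmonic' k) * (Nat.choose n k : ℚ) ^ 3
      = (-1 : ℚ) ^ n := by
  rw [harmonic'_eq_harmonic]
  exact HarmonicCubeSum.cubeSum_eq_neg_one_pow n
end
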